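/- Let W, H be positive integers, let λ ∈ (0,1), and let h_λ be the leaky ReLU, h_λ(t) = t for t > 0 and h_λ(t) = λt for t ≤ 0, applied entrywise. Let F denote the two-dimensional discrete Fourier transform F(x)(k,l) = Σ_{m,n} x(m,n)·exp(−2πi(mk/W + nl/H)), let ⊛ denote circular convolution (w ⊛ x)(m,n) = Σ_{p,q} w(p,q)·x(m−p,n−q), and let ‖·‖ denote the Frobenius norm. Then for any real matrices w, x : (ZMod W) × (ZMod H) → ℝ, one has ‖F(h_λ ∘ (w ⊛ x))‖ ≤ ‖F(w)‖ · ‖F(x)‖. -/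

import Mathlib

open Finset

/-- Leaky ReLU with slope `lam`. -/
noncomputable def lrelu (lam : ℝ) (t : ℝ) : ℝ := if 0 < t then t else lam * t

/-- Two-dimensional discrete Fourier transform of a complex matrix indexed by
`ZMod W × ZMod H`. -/
noncomputable def dft2 {W H : ℕ} [NeZero W] [NeZero H]
    (x : ZMod W × ZMod H → ℂ) : ZMod W × ZMod H → ℂ :=
  fun k => ∑ m : ZMod W × ZMod H,
    x m * Complex.exp
      (((-(2 * Real.pi * ((m.1.val * k.1.val : ℝ) / (W : ℝ) +
          (m.2.val * k.2.val : ℝ) / (H : ℝ)))) : ℝ) * Complex.I)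

/-- Circular (cyclic) convolution of two real matrices indexed by `ZMod W × ZMod H`. -/
noncomputable def cconv {W H : ℕ} [NeZero W] [NeZero H]
    (w x : ZMod W × ZMod H → ℝ) : ZMod W × ZMod H → ℝ :=
  fun m => ∑ p : ZMod W × ZMod H, w p * x (m.1 - p.1, m.2 - p.2)

/-- Frobenius norm of a finitely indexed family of complex numbers. -/
noncomputable def frob {ι : Type*} [Fintype ι] (X : ι → ℂ) : ℝ :=
  Real.sqrt (∑ i, ‖X i‖ ^ 2)

/-- Entrywise complexification of a real matrix. -/
def toC {α : Type*} (x : α → ℝ) : α → ℂ := fun i => (x i : ℂ)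

/-- The 2D DFT kernel as a product of standard additive characters. -/
noncomputable def kern2 {W H : ℕ} [NeZero W] [NeZero H]
    (k m : ZMod W × ZMod H) : ℂ :=
  ZMod.stdAddChar (-(m.1 * k.1)) * ZMod.stdAddChar (-(m.2 * k.2))

lemma kern_eq {N : ℕ} [NeZero N] (a b : ZMod N) :
    Complex.exp (((-(2 * Real.pi * ((a.val * b.val : ℝ) / (N : ℝ)))) : ℝ) * Complex.I)
      = ZMod.stdAddChar (-(a * b)) := by
  have h1 : (-(a * b) : ZMod N) = (((-((a.val : ℤ) * b.val)) : ℤ) : ZMod N) := by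
    rw [Int.cast_neg, Int.cast_mul, Int.cast_natCast, Int.cast_natCast,
      ZMod.natCast_val, ZMod.natCast_val, ZMod.cast_id, ZMod.cast_id]
  rw [h1, ZMod.stdAddChar_coe]
  congr 1
  push_cast
  ring

lemma dft2_eq {W H : ℕ} [NeZero W] [NeZero H] (x : ZMod W × ZMod H → ℂ)
    (k : ZMod W × ZMod H) :
    dft2 x k = ∑ m : ZMod W × ZMod H, x m * kern2 k m := by
  unfold dft2
  refine Finset.sum_congr rfl fun m _ => ?_
  congr 1
  rw [kern2, ← kern_eq, ← kern_eq, ← Complex.exp_add]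
  congr 1
  push_cast
  ring

lemma kern2_add {W H : ℕ} [NeZero W] [NeZero H] (k m n : ZMod W × ZMod H) :
    kern2 k (m + n) = kern2 k m * kern2 k n := by
  simp only [kern2, Prod.fst_add, Prod.snd_add, add_mul, neg_add, AddChar.map_add_eq_mul]
  ring

lemma conj_stdAddChar {N : ℕ} [NeZero N] (a : ZMod N) :
    (starRingEnd ℂ) (ZMod.stdAddChar a) = ZMod.stdAddChar (-a) := by
  have h1 : ZMod.stdAddChar a * ZMod.stdAddChar (-a) = 1 := by
    rw [← AddChar.map_add_eq_mul, add_neg_cancel, AddChar.map_zero_eq_one]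
  have habs : ‖ZMod.stdAddChar a‖ = 1 := by
    rw [ZMod.stdAddChar_apply]; exact Circle.norm_coe _
  have hz : ZMod.stdAddChar a ≠ 0 := by
    intro h; rw [h] at habs; simp at habs
  have : (starRingEnd ℂ) (ZMod.stdAddChar a) * ZMod.stdAddChar a =
      ZMod.stdAddChar (-a) * ZMod.stdAddChar a := by
    rw [Complex.conj_mul', habs]
    rw [mul_comm] at h1
    simp [h1]
  exact mul_right_cancel₀ hz this

lemma conj_kern2 {W H : ℕ} [NeZero W] [NeZero H] (k m : ZMod W × ZMod H) :
    (starRingEnd ℂ) (kern2 k m)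
      = ZMod.stdAddChar (m.1 * k.1) * ZMod.stdAddChar (m.2 * k.2) := by
  rw [kern2, map_mul, conj_stdAddChar, conj_stdAddChar, neg_neg, neg_neg]

/-- Orthogonality of the kernels. -/
lemma kern2_orth {W H : ℕ} [NeZero W] [NeZero H] (m n : ZMod W × ZMod H) :
    ∑ k : ZMod W × ZMod H, kern2 k m * (starRingEnd ℂ) (kern2 k n)
      = if m = n then ((W : ℂ) * H) else 0 := by
  have key : ∀ k : ZMod W × ZMod H, kern2 k m * (starRingEnd ℂ) (kern2 k n)
      = ZMod.stdAddChar (k.1 * (n.1 - m.1)) * ZMod.stdAddChar (k.2 * (n.2 - m.2)) := by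
    intro k
    rw [conj_kern2, kern2, mul_mul_mul_comm, ← AddChar.map_add_eq_mul,
      ← AddChar.map_add_eq_mul]
    congr 1 <;> · congr 1; ring
  simp only [key]
  rw [show (Finset.univ : Finset (ZMod W × ZMod H)) = Finset.univ ×ˢ Finset.univ from
    Finset.univ_product_univ.symm, Finset.sum_product]
  simp only []
  rw [← Finset.sum_mul_sum]
  rw [AddChar.sum_mulShift _ (ZMod.isPrimitive_stdAddChar W),
    AddChar.sum_mulShift _ (ZMod.isPrimitive_stdAddChar H)]
  simp only [sub_eq_zero, ZMod.card]
  by_cases h1 : m.1 = n.1 <;> by_cases h2 : m.2 = n.2 <;>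
    simp [h1, h2, Prod.ext_iff, eq_comm]

lemma parseval_c {W H : ℕ} [NeZero W] [NeZero H] (y : ZMod W × ZMod H → ℂ) :
    ∑ k : ZMod W × ZMod H, dft2 y k * (starRingEnd ℂ) (dft2 y k)
      = ((W : ℂ) * H) * ∑ m : ZMod W × ZMod H, y m * (starRingEnd ℂ) (y m) := by
  simp only [dft2_eq]
  calc ∑ k : ZMod W × ZMod H, (∑ m, y m * kern2 k m) *
        (starRingEnd ℂ) (∑ n, y n * kern2 k n)
      = ∑ k : ZMod W × ZMod H, ∑ m, ∑ n,
          (y m * (starRingEnd ℂ) (y n)) * (kern2 k m * (starRingEnd ℂ) (kern2 k n)) := by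
        refine Finset.sum_congr rfl fun k _ => ?_
        rw [map_sum, Finset.sum_mul_sum]
        refine Finset.sum_congr rfl fun m _ => Finset.sum_congr rfl fun n _ => ?_
        rw [map_mul]; ring
    _ = ∑ m, ∑ n, (y m * (starRingEnd ℂ) (y n)) *
          ∑ k : ZMod W × ZMod H, kern2 k m * (starRingEnd ℂ) (kern2 k n) := by
        rw [Finset.sum_comm]
        refine Finset.sum_congr rfl fun m _ => ?_
        rw [Finset.sum_comm]
        refine Finset.sum_congr rfl fun n _ => ?_
        rw [Finset.mul_sum]
    _ = ∑ m, (y m * (starRingEnd ℂ) (y m)) * ((W : ℂ) * H) := by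
        refine Finset.sum_congr rfl fun m _ => ?_
        simp only [kern2_orth, mul_ite, mul_zero]
        rw [Finset.sum_ite_eq]
        simp
    _ = ((W : ℂ) * H) * ∑ m, y m * (starRingEnd ℂ) (y m) := by
        rw [← Finset.sum_mul, mul_comm]

lemma sum_abs_sq_cast {W H : ℕ} [NeZero W] [NeZero H] (f : ZMod W × ZMod H → ℂ) :
    ((∑ i : ZMod W × ZMod H, ‖f i‖ ^ 2 : ℝ) : ℂ)
      = ∑ i : ZMod W × ZMod H, f i * (starRingEnd ℂ) (f i) := by
  rw [Complex.ofReal_sum]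
  refine Finset.sum_congr rfl fun i _ => ?_
  rw [Complex.mul_conj]
  exact congrArg Complex.ofReal (Complex.sq_norm _)

lemma parseval {W H : ℕ} [NeZero W] [NeZero H] (y : ZMod W × ZMod H → ℂ) :
    ∑ k : ZMod W × ZMod H, ‖dft2 y k‖ ^ 2
      = (W * H : ℝ) * ∑ m : ZMod W × ZMod H, ‖y m‖ ^ 2 := by
  apply Complex.ofReal_injective
  rw [sum_abs_sq_cast, parseval_c]
  push_cast [← sum_abs_sq_cast]
  ring

lemma dft2_cconv {W H : ℕ} [NeZero W] [NeZero H] (w x : ZMod W × ZMod H → ℝ)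
    (k : ZMod W × ZMod H) :
    dft2 (toC (cconv w x)) k = dft2 (toC w) k * dft2 (toC x) k := by
  have L : dft2 (toC (cconv w x)) k
      = ∑ p : ZMod W × ZMod H, ∑ q : ZMod W × ZMod H,
          (((w p : ℂ) * kern2 k p) * ((x q : ℂ) * kern2 k q)) := by
    rw [dft2_eq]
    calc ∑ m : ZMod W × ZMod H, toC (cconv w x) m * kern2 k m
        = ∑ m : ZMod W × ZMod H, ∑ p : ZMod W × ZMod H,
            ((w p : ℂ) * (x (m.1 - p.1, m.2 - p.2) : ℂ)) * kern2 k m := by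
          refine Finset.sum_congr rfl fun m _ => ?_
          unfold toC cconv
          push_cast
          rw [Finset.sum_mul]
      _ = ∑ p : ZMod W × ZMod H, ∑ m : ZMod W × ZMod H,
            ((w p : ℂ) * (x (m.1 - p.1, m.2 - p.2) : ℂ)) * kern2 k m :=
          Finset.sum_comm
      _ = ∑ p : ZMod W × ZMod H, ∑ q : ZMod W × ZMod H,
            (((w p : ℂ) * kern2 k p) * ((x q : ℂ) * kern2 k q)) := by
          refine Finset.sum_congr rfl fun p _ => ?_
          rw [← Equiv.sum_comp (Equiv.addLeft p)
            (fun m => ((w p : ℂ) * (x (m.1 - p.1, m.2 - p.2) : ℂ)) * kern2 k m)]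
          refine Finset.sum_congr rfl fun q _ => ?_
          simp only [Equiv.coe_addLeft, Prod.fst_add, Prod.snd_add,
            add_sub_cancel_left, kern2_add]
          ring
  rw [L, dft2_eq, dft2_eq, Finset.sum_mul_sum]
  rfl

lemma lrelu_sq_le (lam : ℝ) (hlam : lam ∈ Set.Ioo (0 : ℝ) 1) (t : ℝ) :
    (lrelu lam t) ^ 2 ≤ t ^ 2 := by
  obtain ⟨h0, h1⟩ := hlam
  unfold lrelu
  split_ifs with h
  · exact le_rfl
  · push_neg at h
    have hl2 : lam ^ 2 ≤ 1 := by nlinarith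
    nlinarith [mul_nonneg (sub_nonneg.2 hl2) (sq_nonneg t)]

/-- `‖F(h_λ ∘ (w ⊛ x))‖ ≤ ‖F(w)‖ · ‖F(x)‖` for the 2D DFT, circular convolution,
entrywise leaky ReLU and Frobenius norm. -/
theorem frob_dft2_lrelu_cconv_le (W H : ℕ) [NeZero W] [NeZero H]
    (lam : ℝ) (hlam : lam ∈ Set.Ioo (0 : ℝ) 1)
    (w x : ZMod W × ZMod H → ℝ) :
    frob (dft2 (toC (fun i => lrelu lam (cconv w x i)))) ≤
      frob (dft2 (toC w)) * frob (dft2 (toC x)) := by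
  have key : ∑ k : ZMod W × ZMod H,
      ‖dft2 (toC (fun i => lrelu lam (cconv w x i))) k‖ ^ 2 ≤
      (∑ k : ZMod W × ZMod H, ‖dft2 (toC w) k‖ ^ 2) *
      (∑ k : ZMod W × ZMod H, ‖dft2 (toC x) k‖ ^ 2) := by
    have h1 : ∑ k : ZMod W × ZMod H,
        ‖dft2 (toC (fun i => lrelu lam (cconv w x i))) k‖ ^ 2
        = (W * H : ℝ) * ∑ i : ZMod W × ZMod H, (lrelu lam (cconv w x i)) ^ 2 := by
      rw [parseval]
      congr 1
      refine Finset.sum_congr rfl fun i _ => ?_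
      simp [toC, Complex.norm_real, sq_abs]
    have h2 : ∑ i : ZMod W × ZMod H, (lrelu lam (cconv w x i)) ^ 2
        ≤ ∑ i : ZMod W × ZMod H, (cconv w x i) ^ 2 :=
      Finset.sum_le_sum fun i _ => lrelu_sq_le lam hlam _
    have h3 : (W * H : ℝ) * ∑ i : ZMod W × ZMod H, (cconv w x i) ^ 2
        = ∑ k : ZMod W × ZMod H, ‖dft2 (toC (cconv w x)) k‖ ^ 2 := by
      rw [parseval]
      congr 1
      refine Finset.sum_congr rfl fun i _ => ?_
      simp [toC, Complex.norm_real, sq_abs]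
    have h4 : ∑ k : ZMod W × ZMod H, ‖dft2 (toC (cconv w x)) k‖ ^ 2
        = ∑ k : ZMod W × ZMod H,
            ‖dft2 (toC w) k‖ ^ 2 * ‖dft2 (toC x) k‖ ^ 2 := by
      refine Finset.sum_congr rfl fun k _ => ?_
      rw [dft2_cconv, norm_mul, mul_pow]
    have h5 : ∑ k : ZMod W × ZMod H,
        ‖dft2 (toC w) k‖ ^ 2 * ‖dft2 (toC x) k‖ ^ 2
        ≤ (∑ k : ZMod W × ZMod H, ‖dft2 (toC w) k‖ ^ 2) *
          (∑ k : ZMod W × ZMod H, ‖dft2 (toC x) k‖ ^ 2) := by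
      calc ∑ k : ZMod W × ZMod H,
          ‖dft2 (toC w) k‖ ^ 2 * ‖dft2 (toC x) k‖ ^ 2
          ≤ ∑ k : ZMod W × ZMod H, ‖dft2 (toC w) k‖ ^ 2 *
              (∑ j : ZMod W × ZMod H, ‖dft2 (toC x) j‖ ^ 2) := by
            refine Finset.sum_le_sum fun k _ => ?_
            refine mul_le_mul_of_nonneg_left ?_ (sq_nonneg _)
            exact Finset.single_le_sum
              (f := fun j => ‖dft2 (toC x) j‖ ^ 2)
              (fun j _ => sq_nonneg _) (Finset.mem_univ k)
        _ = (∑ k : ZMod W × ZMod H, ‖dft2 (toC w) k‖ ^ 2) *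
            (∑ k : ZMod W × ZMod H, ‖dft2 (toC x) k‖ ^ 2) := by
            rw [← Finset.sum_mul]
    have hWH : (0 : ℝ) ≤ (W * H : ℝ) := by positivity
    calc ∑ k : ZMod W × ZMod H,
        ‖dft2 (toC (fun i => lrelu lam (cconv w x i))) k‖ ^ 2
        = (W * H : ℝ) * ∑ i : ZMod W × ZMod H, (lrelu lam (cconv w x i)) ^ 2 := h1
      _ ≤ (W * H : ℝ) * ∑ i : ZMod W × ZMod H, (cconv w x i) ^ 2 :=
          mul_le_mul_of_nonneg_left h2 hWH
      _ = ∑ k : ZMod W × ZMod H, ‖dft2 (toC (cconv w x)) k‖ ^ 2 := h3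
      _ = _ := h4
      _ ≤ _ := h5
  unfold frob
  rw [← Real.sqrt_mul (by positivity)]
  exact Real.sqrt_le_sqrt key
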